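/- For every Borel probability measure P on ℝ^d × ℝ and every trimming level α ∈ (0,1), the supremum of the trimmed log-likelihood functional over the constrained parameter set is finite from below: sup_{θ ∈ Θ_{c_X,c_ε}} L(θ,P) > −∞. -/

import Mathlib

/-!
Take the parameter whose components are all standard normal with equal weights. Its density
`D` is positive everywhere, so by continuity of `P` from below some level `u > 0` has
`P[D ≥ u] ≥ 1 - α`; by continuity from above the set of such levels is bounded (otherwise
`sSup` would return the junk value `0`). Hence `R(θ, P) ≥ u > 0`, and on the trimming set
`-log D ≤ -log u`, a constant integrated over a set of finite measure.
-/

open MeasureTheory Filter Topology Matrix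

noncomputable section

abbrev Vec (d : ℕ) := Fin d → ℝ

structure CWMParam (d G : ℕ) where
  pi : Fin G → ℝ
  mu : Fin G → Vec d
  Sigma : Fin G → Matrix (Fin d) (Fin d) ℝ
  b0 : Fin G → ℝ
  b : Fin G → Vec d
  sigma2 : Fin G → ℝ
  pi_nonneg : ∀ g, 0 ≤ pi g
  pi_sum : ∑ g, pi g = 1
  Sigma_posdef : ∀ g, (Sigma g).PosDef
  sigma2_pos : ∀ g, 0 < sigma2 g

variable {d G : ℕ}

/-- The `l`-th eigenvalue of the `g`-th scatter matrix. -/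
def CWMParam.eigval (θ : CWMParam d G) (g : Fin G) (l : Fin d) : ℝ :=
  (θ.Sigma_posdef g).isHermitian.eigenvalues l

/-- The constrained parameter set `Θ_{c_X, c_ε}`. -/
def ThetaSet (d G : ℕ) (cX ceps : ℝ) : Set (CWMParam d G) :=
  {θ | (∀ g1 g2 : Fin G, ∀ l1 l2 : Fin d, θ.eigval g1 l1 ≤ cX * θ.eigval g2 l2) ∧
       (∀ g1 g2 : Fin G, θ.sigma2 g1 ≤ ceps * θ.sigma2 g2)}

/-- Univariate Gaussian density. -/
def gauss1 (y m s2 : ℝ) : ℝ :=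
  (Real.sqrt (2 * Real.pi * s2))⁻¹ * Real.exp (-((y - m) ^ 2) / (2 * s2))

/-- `d`-variate Gaussian density. -/
def gaussd (d : ℕ) (x mu : Vec d) (S : Matrix (Fin d) (Fin d) ℝ) : ℝ :=
  (2 * Real.pi) ^ (-(d : ℝ) / 2) * (Real.sqrt S.det)⁻¹ *
    Real.exp (-(dotProduct (x - mu) (S⁻¹ *ᵥ (x - mu))) / 2)

/-- The `g`-th mixture component density `D_g(x, y; θ)`. -/
def Dg (θ : CWMParam d G) (g : Fin G) (z : Vec d × ℝ) : ℝ :=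
  gauss1 z.2 (dotProduct (θ.b g) z.1 + θ.b0 g) (θ.sigma2 g)
    * gaussd d z.1 (θ.mu g) (θ.Sigma g) * θ.pi g

/-- The mixture density `D(x, y; θ)`. -/
def Dfun (θ : CWMParam d G) (z : Vec d × ℝ) : ℝ := ∑ g, Dg θ g z

/-- The trimming threshold `R(θ, P)`. -/
def Rfun (α : ℝ) (θ : CWMParam d G) (P : Measure (Vec d × ℝ)) : ℝ :=
  sSup {u : ℝ | 1 - α ≤ (P {z | u ≤ Dfun θ z}).toReal}

/-- The trimming set `A(θ, P)`. -/
def Aset (α : ℝ) (θ : CWMParam d G) (P : Measure (Vec d × ℝ)) : Set (Vec d × ℝ) :=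
  {z | Rfun α θ P ≤ Dfun θ z}

/-- The trimmed log-likelihood functional `L(θ, P)`. -/
def Lfun (α : ℝ) (θ : CWMParam d G) (P : Measure (Vec d × ℝ)) : ℝ :=
  ∫ z in Aset α θ P, Real.log (Dfun θ z) ∂P

/-- Condition (PR). -/
def PRcond (d G : ℕ) (α : ℝ) (P : Measure (Vec d × ℝ)) : Prop :=
  ∀ B : Set (Vec d × ℝ), MeasurableSet B → 1 - α ≤ (P B).toReal →
    (∀ (b0 : Fin G → ℝ) (b : Fin G → Vec d),
      0 < P (B \ ⋃ g, {z | z.2 = dotProduct (b g) z.1 + b0 g})) ∧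
    (∀ mu : Fin G → Vec d, 0 < P (B \ ⋃ g, {z | z.1 = mu g}))

/-- Empirical measure of the first `n` observations. -/
def empMeasure (obs : ℕ → Vec d × ℝ) (n : ℕ) : Measure (Vec d × ℝ) :=
  (n : ENNReal)⁻¹ • ∑ i ∈ Finset.range n, Measure.dirac (obs i)

/-- Topology on parameters: the one induced by the product of all components. -/
instance : TopologicalSpace (CWMParam d G) :=
  TopologicalSpace.induced
    (fun θ => (θ.pi, θ.mu, θ.Sigma, θ.b0, θ.b, θ.sigma2)) inferInstance

section Superlevel

variable {Ω : Type*} [MeasurableSpace Ω] (P : Measure Ω) [IsProbabilityMeasure P]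
  {f : Ω → ℝ} {β : ℝ}

lemma bddAbove_setOf_le_measure_superlevel (hf : Measurable f) (hβ : 0 < β) :
    BddAbove {u : ℝ | β ≤ (P {z | u ≤ f z}).toReal} := by
  have hanti : Antitone fun n : ℕ => {z | (n : ℝ) ≤ f z} :=
    fun m n hmn z (hz : (n : ℝ) ≤ f z) => le_trans (by exact_mod_cast hmn) hz
  have hempty : ⋂ n : ℕ, {z | (n : ℝ) ≤ f z} = ∅ := by
    ext z
    simpa using exists_nat_gt (f z)
  have htend := tendsto_measure_iInter_atTop (μ := P) (s := fun n : ℕ => {z | (n : ℝ) ≤ f z})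
    (fun n => (hf measurableSet_Ici).nullMeasurableSet) hanti ⟨0, measure_ne_top P _⟩
  rw [hempty, measure_empty] at htend
  obtain ⟨n, hn⟩ := (htend.eventually (gt_mem_nhds (ENNReal.ofReal_pos.mpr hβ))).exists
  refine ⟨n, fun u hu => le_of_not_gt fun hnu => ?_⟩
  have hsub : {z | u ≤ f z} ⊆ {z | (n : ℝ) ≤ f z} := fun z hz => hnu.le.trans hz
  have := (ENNReal.toReal_mono (measure_ne_top P _) (measure_mono hsub)).trans_lt
    (ENNReal.toReal_lt_of_lt_ofReal hn)
  exact (lt_irrefl β) (hu.trans_lt this)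

lemma exists_pos_le_measure_superlevel (hf : ∀ z, 0 < f z) (hβ : β < 1) :
    ∃ u > 0, β ≤ (P {z | u ≤ f z}).toReal := by
  have hmono : Monotone fun n : ℕ => {z | ((n : ℝ) + 1)⁻¹ ≤ f z} := by
    intro m n hmn z (hz : ((m : ℝ) + 1)⁻¹ ≤ f z)
    refine le_trans ?_ hz
    gcongr
  have huniv : ⋃ n : ℕ, {z | ((n : ℝ) + 1)⁻¹ ≤ f z} = Set.univ := by
    refine Set.eq_univ_of_forall fun z => Set.mem_iUnion.mpr ?_
    obtain ⟨n, hn⟩ := exists_nat_one_div_lt (hf z)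
    exact ⟨n, show _ ≤ f z by simpa only [one_div] using hn.le⟩
  have htend := tendsto_measure_iUnion_atTop (μ := P) hmono
  rw [huniv, measure_univ] at htend
  obtain ⟨n, hn⟩ :=
    (htend.eventually (lt_mem_nhds ((ENNReal.ofReal_lt_one).mpr hβ))).exists
  exact ⟨_, by positivity, (ENNReal.ofReal_le_iff_le_toReal (measure_ne_top P _)).mp hn.le⟩

lemma setLIntegral_neg_log_superlevel_lt_top (hf : Measurable f) (hpos : ∀ z, 0 < f z)
    (hβ₀ : 0 < β) (hβ₁ : β < 1) :
    ∫⁻ z in {z | sSup {u : ℝ | β ≤ (P {z | u ≤ f z}).toReal} ≤ f z},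
      ENNReal.ofReal (-Real.log (f z)) ∂P < ⊤ := by
  obtain ⟨u, hu, hmem⟩ := exists_pos_le_measure_superlevel P hpos hβ₁
  have hR := le_csSup (bddAbove_setOf_le_measure_superlevel P hf hβ₀) hmem
  refine setLIntegral_lt_top_of_le_nnreal (measure_ne_top P _)
    ⟨Real.toNNReal (-Real.log u), fun z hz => ENNReal.ofReal_le_ofReal ?_⟩
  have := Real.log_le_log hu (hR.trans hz)
  linarith

end Superlevel

lemma Matrix.IsHermitian.eigenvalues_one {𝕜 n : Type*} [RCLike 𝕜] [Fintype n] [DecidableEq n]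
    (h : (1 : Matrix n n 𝕜).IsHermitian) (l : n) : h.eigenvalues l = 1 := by
  rw [h.eigenvalues_eq, Matrix.one_mulVec, dotProduct_comm,
    ← EuclideanSpace.inner_eq_star_dotProduct, inner_self_eq_norm_sq_to_K,
    h.eigenvectorBasis.orthonormal.1 l]
  simp

lemma gauss1_pos (y m : ℝ) {s2 : ℝ} (hs2 : 0 < s2) : 0 < gauss1 y m s2 := by
  unfold gauss1
  have := Real.sqrt_pos.mpr (by positivity : 0 < 2 * Real.pi * s2)
  positivity

lemma gaussd_pos (x mu : Vec d) {S : Matrix (Fin d) (Fin d) ℝ} (hS : S.PosDef) :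
    0 < gaussd d x mu S := by
  unfold gaussd
  have := Real.sqrt_pos.mpr hS.det_pos
  have := Real.rpow_pos_of_pos (by positivity : (0 : ℝ) < 2 * Real.pi) (-(d : ℝ) / 2)
  positivity

lemma Dfun_pos (θ : CWMParam d G) (z : Vec d × ℝ) : 0 < Dfun θ z := by
  have hcomp : ∀ g, 0 < gauss1 z.2 (dotProduct (θ.b g) z.1 + θ.b0 g) (θ.sigma2 g)
      * gaussd d z.1 (θ.mu g) (θ.Sigma g) := fun g =>
    mul_pos (gauss1_pos _ _ (θ.sigma2_pos g)) (gaussd_pos _ _ (θ.Sigma_posdef g))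
  obtain ⟨g, -, hg⟩ : ∃ g ∈ Finset.univ, (0 : ℝ) < θ.pi g :=
    Finset.exists_lt_of_sum_lt (by simp [θ.pi_sum])
  exact Finset.sum_pos' (fun g _ => mul_nonneg (hcomp g).le (θ.pi_nonneg g))
    ⟨g, Finset.mem_univ _, mul_pos (hcomp g) hg⟩

lemma measurable_Dfun (θ : CWMParam d G) : Measurable (Dfun θ) := by
  unfold Dfun Dg gauss1 gaussd
  simp only [Matrix.mulVec, dotProduct]
  fun_prop

def CWMParam.standard (d G : ℕ) (hG : 0 < G) : CWMParam d G where
  pi := fun _ => (G : ℝ)⁻¹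
  mu := fun _ => 0
  Sigma := fun _ => 1
  b0 := fun _ => 0
  b := fun _ => 0
  sigma2 := fun _ => 1
  pi_nonneg := fun _ => by positivity
  pi_sum := by
    rw [Finset.sum_const, Finset.card_univ, Fintype.card_fin, nsmul_eq_mul]
    exact mul_inv_cancel₀ (Nat.cast_ne_zero.mpr hG.ne')
  Sigma_posdef := fun _ => Matrix.PosDef.one
  sigma2_pos := fun _ => one_pos

lemma CWMParam.standard_mem_thetaSet (hG : 0 < G) {cX ceps : ℝ} (hcX : 1 ≤ cX)
    (hceps : 1 ≤ ceps) : CWMParam.standard d G hG ∈ ThetaSet d G cX ceps := by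
  refine ⟨fun g1 g2 l1 l2 => ?_, fun g1 g2 => ?_⟩
  · have hone : ∀ g l, (CWMParam.standard d G hG).eigval g l = 1 :=
      fun g l => Matrix.IsHermitian.eigenvalues_one _ l
    rw [hone, hone]
    linarith
  · simpa [CWMParam.standard] using hceps

theorem statement8_general (d G : ℕ) (hG : 1 ≤ G) (cX ceps α : ℝ)
    (hcX : 1 ≤ cX) (hceps : 1 ≤ ceps) (hα : α ∈ Set.Ioo (0 : ℝ) 1)
    (P : Measure (Vec d × ℝ)) [IsProbabilityMeasure P] :
    ∃ θ ∈ ThetaSet d G cX ceps,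
      ∫⁻ z in Aset α θ P, ENNReal.ofReal (-(Real.log (Dfun θ z))) ∂P < ⊤ :=
  ⟨CWMParam.standard d G hG, CWMParam.standard_mem_thetaSet hG hcX hceps,
    setLIntegral_neg_log_superlevel_lt_top P (measurable_Dfun _) (Dfun_pos _)
      (by linarith [hα.2]) (by linarith [hα.1])⟩

/-- the supremum of the trimmed log-likelihood over the constrained set is
bounded from below, i.e. some parameter has a trimmed log-likelihood greater than `-∞`
(its negative part is integrable on the trimming set). -/
theorem statement8 (d G : ℕ) (hd : 1 ≤ d) (hG : 1 ≤ G) (cX ceps α : ℝ)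
    (hcX : 1 ≤ cX) (hceps : 1 ≤ ceps) (hα : α ∈ Set.Ioo (0 : ℝ) 1)
    (P : Measure (Vec d × ℝ)) [IsProbabilityMeasure P] :
    ∃ θ ∈ ThetaSet d G cX ceps,
      ∫⁻ z in Aset α θ P, ENNReal.ofReal (-(Real.log (Dfun θ z))) ∂P < ⊤ :=
  statement8_general d G hG cX ceps α hcX hceps hα P

end
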